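/- arXiv:1903.02659 — 5 statements merged into one kernel-verified Lean document; each statement's English description precedes it below -/
import Mathlib

section
/- Suppose S : U → ℝ is smooth with S(0)=0, S⁽¹⁾(0)=0, and S⁽²⁾(0)(α,ξ)=0 for all ξ ∈ E, and F : I → E is smooth with F(0)=0 and F′(0)=0. Then for r(s) = S(sα + F(s)) one has r(0)=0, r′(0)=0, r″(0)=0, and r‴(0) = S⁽³⁾(0)(α,α,α). -/
set_option maxHeartbeats 1000000
set_option synthInstance.maxHeartbeats 400000

/-- if `S(0)=0`, `S⁽¹⁾(0)=0`, `S⁽²⁾(0)(α,·)=0`, `F(0)=0`, `F′(0)=0`, then for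
`r(s) = S(sα+F(s))` we have `r(0)=0`, `r′(0)=0`, `r″(0)=0` and `r‴(0)=S⁽³⁾(0)(α,α,α)`. -/
theorem thirdDeriv_comp_curve
    {E : Type*} [NormedAddCommGroup E] [NormedSpace ℝ E] [CompleteSpace E]
    (U : Set E) (hU : IsOpen U) (hU0 : (0 : E) ∈ U)
    (S : E → ℝ) (hS : ContDiffOn ℝ (⊤ : ℕ∞) S U)
    (a b : ℝ) (hab : (0 : ℝ) ∈ Set.Ioo a b)
    (F : ℝ → E) (hF : ContDiffOn ℝ (⊤ : ℕ∞) F (Set.Ioo a b))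
    (α : E) (hmem : ∀ s ∈ Set.Ioo a b, s • α + F s ∈ U)
    (hS0 : S 0 = 0)
    (hS1 : iteratedFDerivWithin ℝ 1 S U 0 = 0)
    (hS2 : ∀ ξ : E, iteratedFDerivWithin ℝ 2 S U 0 ![α, ξ] = 0)
    (hF0 : F 0 = 0) (hF1 : derivWithin F (Set.Ioo a b) 0 = 0) :
    (fun t => S (t • α + F t)) 0 = 0 ∧
    derivWithin (fun t => S (t • α + F t)) (Set.Ioo a b) 0 = 0 ∧
    iteratedDerivWithin 2 (fun t => S (t • α + F t)) (Set.Ioo a b) 0 = 0 ∧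
    iteratedDerivWithin 3 (fun t => S (t • α + F t)) (Set.Ioo a b) 0 =
      iteratedFDerivWithin ℝ 3 S U 0 ![α, α, α] := by
  have hIo : IsOpen (Set.Ioo a b) := isOpen_Ioo
  set γ : ℝ → E := fun t => t • α + F t with hγ_def
  have hγ0 : γ 0 = 0 := by simp [hγ_def, hF0]
  have hγsm : ContDiffOn ℝ (⊤ : ℕ∞) γ (Set.Ioo a b) :=
    ((contDiff_id.smul contDiff_const).contDiffOn).add hF
  set V : Set ℝ := Set.Ioo a b ∩ γ ⁻¹' U with hV_def
  have hVopen : IsOpen V := hγsm.continuousOn.isOpen_inter_preimage hIo hU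
  have hV0 : (0 : ℝ) ∈ V := ⟨hab, by simp [Set.mem_preimage, hγ0, hU0]⟩
  -- derivatives of F
  have hF1' : ContDiffOn ℝ (⊤ : ℕ∞) (deriv F) (Set.Ioo a b) := hF.deriv_of_isOpen hIo (by simp)
  have hF2' : ContDiffOn ℝ (⊤ : ℕ∞) (deriv (deriv F)) (Set.Ioo a b) := hF1'.deriv_of_isOpen hIo (by simp)
  have hFd : ∀ t ∈ Set.Ioo a b, HasDerivAt F (deriv F t) t := fun t ht =>
    ((hF.contDiffAt (hIo.mem_nhds ht)).differentiableAt (by simp)).hasDerivAt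
  have hFd1 : ∀ t ∈ Set.Ioo a b, HasDerivAt (deriv F) (deriv (deriv F) t) t := fun t ht =>
    ((hF1'.contDiffAt (hIo.mem_nhds ht)).differentiableAt (by simp)).hasDerivAt
  have hFd2 : HasDerivAt (deriv (deriv F)) (deriv (deriv (deriv F)) 0) 0 :=
    ((hF2'.contDiffAt (hIo.mem_nhds hab)).differentiableAt (by simp)).hasDerivAt
  have hderivF0 : deriv F 0 = 0 := by rw [← derivWithin_of_isOpen hIo hab]; exact hF1
  set c : ℝ → E := fun t => α + deriv F t with hc_def
  have hc0 : c 0 = α := by simp [hc_def, hderivF0]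
  have hcd : ∀ t ∈ Set.Ioo a b, HasDerivAt c (deriv (deriv F) t) t := fun t ht =>
    (hFd1 t ht).const_add α
  have hγd : ∀ t ∈ Set.Ioo a b, HasDerivAt γ (c t) t := fun t ht => by
    have h1 : HasDerivAt (fun t : ℝ => t • α) ((1 : ℝ) • α) t := (hasDerivAt_id t).smul_const α
    simpa [hγ_def, hc_def, one_smul, Pi.add_def] using h1.add (hFd t ht)
  -- derivatives of S
  set D1 : E → E →L[ℝ] ℝ := fderiv ℝ S with hD1_def
  set D2 : E → E →L[ℝ] E →L[ℝ] ℝ := fderiv ℝ D1 with hD2_def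
  set D3 : E → E →L[ℝ] E →L[ℝ] E →L[ℝ] ℝ := fderiv ℝ D2 with hD3_def
  have hD1sm : ContDiffOn ℝ (⊤ : ℕ∞) D1 U := hS.fderiv_of_isOpen hU (by simp)
  have hD2sm : ContDiffOn ℝ (⊤ : ℕ∞) D2 U := hD1sm.fderiv_of_isOpen hU (by simp)
  have hSdiff : ∀ x ∈ U, HasFDerivAt S (D1 x) x := fun x hx =>
    ((hS.contDiffAt (hU.mem_nhds hx)).differentiableAt (by simp)).hasFDerivAt
  have hD1diff : ∀ x ∈ U, HasFDerivAt D1 (D2 x) x := fun x hx =>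
    ((hD1sm.contDiffAt (hU.mem_nhds hx)).differentiableAt (by simp)).hasFDerivAt
  have hD2diff : ∀ x ∈ U, HasFDerivAt D2 (D3 x) x := fun x hx =>
    ((hD2sm.contDiffAt (hU.mem_nhds hx)).differentiableAt (by simp)).hasFDerivAt
  -- vanishing hypotheses translated
  have hD1_0 : D1 0 = 0 := by
    ext ξ
    have h1 : iteratedFDerivWithin ℝ 1 S U 0 ![ξ] = fderivWithin ℝ S U 0 ξ := by
      rw [iteratedFDerivWithin_one_apply (hU.uniqueDiffOn.uniqueDiffWithinAt hU0)]
      simp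
    have h2 : fderivWithin ℝ S U 0 = D1 0 := fderivWithin_of_isOpen hU hU0
    rw [ContinuousLinearMap.zero_apply, ← h2, ← h1, hS1]
    rfl
  have hfW : fderivWithin ℝ (fderivWithin ℝ S U) U 0 = D2 0 := by
    have h1 : Set.EqOn (fderivWithin ℝ S U) D1 U := fun x hx => fderivWithin_of_isOpen hU hx
    rw [fderivWithin_congr h1 (h1 hU0), fderivWithin_of_isOpen hU hU0]
  have hD2_0 : ∀ ξ : E, D2 0 α ξ = 0 := fun ξ => by
    have h1 := iteratedFDerivWithin_two_apply (𝕜 := ℝ) S hU.uniqueDiffOn hU0 ![α, ξ]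
    rw [hS2 ξ, hfW] at h1
    simpa using h1.symm
  have hsymm : IsSymmSndFDerivAt ℝ S 0 :=
    (hS.contDiffAt (hU.mem_nhds hU0)).isSymmSndFDerivAt (by rw [minSmoothness_of_isRCLikeNormedField]; exact WithTop.coe_le_coe.2 le_top)
  have hD2_0' : ∀ ξ : E, D2 0 ξ α = 0 := fun ξ => by
    rw [hD2_def, hD1_def] at hD2_0 ⊢
    rw [hsymm ξ α]; exact hD2_0 ξ
  -- step A : first derivative
  have stepA : ∀ t ∈ V, HasDerivAt (fun t => S (γ t)) (D1 (γ t) (c t)) t := fun t ht =>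
    (hSdiff _ ht.2).comp_hasDerivAt t (hγd t ht.1)
  set r1 : ℝ → ℝ := fun t => D1 (γ t) (c t) with hr1_def
  have hderiv_r : ∀ t ∈ V, deriv (fun t => S (γ t)) t = r1 t := fun t ht => (stepA t ht).deriv
  -- step B : second derivative
  have stepB : ∀ t ∈ V,
      HasDerivAt r1 (D2 (γ t) (c t) (c t) + D1 (γ t) (deriv (deriv F) t)) t := fun t ht => by
    have hg : HasDerivAt (fun t => D1 (γ t)) (D2 (γ t) (c t)) t :=
      (hD1diff _ ht.2).comp_hasDerivAt t (hγd t ht.1)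
    exact hg.clm_apply (hcd t ht.1)
  set r2 : ℝ → ℝ := fun t => D2 (γ t) (c t) (c t) + D1 (γ t) (deriv (deriv F) t) with hr2_def
  have hderiv_r1 : ∀ t ∈ V, deriv r1 t = r2 t := fun t ht => (stepB t ht).deriv
  -- step C : third derivative at 0
  have hq : HasDerivAt (fun t => D2 (γ t)) (D3 0 α) 0 := by
    have h := HasFDerivAt.comp_hasDerivAt (l := D2) (l' := D3 (γ 0)) (f := γ) 0 (hD2diff _ hV0.2) (hγd 0 hab)
    rw [hγ0, hc0] at h
    exact h
  have hh : HasDerivAt (fun t => D2 (γ t) (c t))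
      (D3 0 α α + D2 0 (deriv (deriv F) 0)) 0 := by
    have h := hq.clm_apply (hcd 0 hab)
    rw [hγ0, hc0] at h
    exact h
  have hpart1 : HasDerivAt (fun t => D2 (γ t) (c t) (c t))
      ((D3 0 α α + D2 0 (deriv (deriv F) 0)) α + D2 0 α (deriv (deriv F) 0)) 0 := by
    have h := hh.clm_apply (hcd 0 hab)
    rw [hγ0, hc0] at h
    exact h
  have hpart2 : HasDerivAt (fun t => D1 (γ t) (deriv (deriv F) t))
      (D2 0 α (deriv (deriv F) 0) + D1 0 (deriv (deriv (deriv F)) 0)) 0 := by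
    have hg : HasDerivAt (fun t => D1 (γ t)) (D2 0 α) 0 := by
      have h := (hD1diff _ hV0.2).comp_hasDerivAt (f := γ) 0 (hγd 0 hab)
      rw [hγ0, hc0] at h
      exact h
    have h := hg.clm_apply hFd2
    rw [hγ0] at h
    exact h
  have stepC : HasDerivAt r2
      (((D3 0 α α + D2 0 (deriv (deriv F) 0)) α + D2 0 α (deriv (deriv F) 0)) +
        (D2 0 α (deriv (deriv F) 0) + D1 0 (deriv (deriv (deriv F)) 0))) 0 :=
    hpart1.add hpart2
  have hderiv_r2_0 : deriv r2 0 = D3 0 α α α := by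
    rw [stepC.deriv, ContinuousLinearMap.add_apply, hD1_0, hD2_0, hD2_0']
    simp
  -- scalar derivative bookkeeping
  have hUD : UniqueDiffOn ℝ (Set.Ioo a b) := hIo.uniqueDiffOn
  have h1eq : ∀ t ∈ V, iteratedDerivWithin 1 (fun t => S (γ t)) (Set.Ioo a b) t = r1 t :=
    fun t ht => by
      rw [iteratedDerivWithin_one,
        derivWithin_of_isOpen hIo ht.1, hderiv_r t ht]
  have h2eq : ∀ t ∈ V, iteratedDerivWithin 2 (fun t => S (γ t)) (Set.Ioo a b) t = r2 t :=
    fun t ht => by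
      rw [iteratedDerivWithin_succ,
        derivWithin_of_isOpen hIo ht.1]
      have hev : iteratedDerivWithin 1 (fun t => S (γ t)) (Set.Ioo a b) =ᶠ[nhds t] r1 :=
        Filter.eventuallyEq_of_mem (hVopen.mem_nhds ht) h1eq
      rw [hev.deriv_eq, hderiv_r1 t ht]
  refine ⟨by simp [hF0, hS0], ?_, ?_, ?_⟩
  · rw [derivWithin_of_isOpen hIo hab]
    have := hderiv_r 0 hV0
    rw [this, hr1_def]
    simp [hγ0, hc0, hD1_0]
  · rw [h2eq 0 hV0, hr2_def]
    simp [hγ0, hc0, hD1_0, hD2_0]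
  · have h3 : iteratedDerivWithin 3 (fun t => S (γ t)) (Set.Ioo a b) 0 = D3 0 α α α := by
      rw [iteratedDerivWithin_succ,
        derivWithin_of_isOpen hIo hab]
      have hev : iteratedDerivWithin 2 (fun t => S (γ t)) (Set.Ioo a b) =ᶠ[nhds 0] r2 :=
        Filter.eventuallyEq_of_mem (hVopen.mem_nhds hV0) h2eq
      rw [hev.deriv_eq, hderiv_r2_0]
    rw [h3, iteratedFDerivWithin_of_isOpen 3 hU hU0, iteratedFDeriv_succ_apply_right,
      iteratedFDeriv_two_apply]
    simp [Fin.init, Fin.last, hD3_def, hD2_def, hD1_def]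
end

section
/- Under the assumptions S(0)=0, S⁽¹⁾(0)=0, S⁽²⁾(0)(α,·)=0, F(0)=0, F′(0)=0, the fourth derivative of r(s) = S(sα+F(s)) at 0 equals r⁗(0) = S⁽⁴⁾(0)(α,α,α,α) + 6 S⁽³⁾(0)(α,α,F″(0)) + 3 S⁽²⁾(0)(F″(0),F″(0)). -/
open Set Filter

set_option maxHeartbeats 2000000 in
/-- under `S(0)=0`, `S⁽¹⁾(0)=0`, `S⁽²⁾(0)(α,·)=0`, `F(0)=0`, `F′(0)=0`, the fourth
derivative of `r(s)=S(sα+F(s))` at `0` equals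
`S⁽⁴⁾(0)(α,α,α,α) + 6 S⁽³⁾(0)(α,α,F″(0)) + 3 S⁽²⁾(0)(F″(0),F″(0))`. -/
theorem fourthDeriv_comp_curve
    {E : Type*} [NormedAddCommGroup E] [NormedSpace ℝ E] [CompleteSpace E]
    (U : Set E) (hU : IsOpen U) (hU0 : (0 : E) ∈ U)
    (S : E → ℝ) (hS : ContDiffOn ℝ (⊤ : ℕ∞) S U)
    (a b : ℝ) (hab : (0 : ℝ) ∈ Set.Ioo a b)
    (F : ℝ → E) (hF : ContDiffOn ℝ (⊤ : ℕ∞) F (Set.Ioo a b))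
    (α : E) (hmem : ∀ s ∈ Set.Ioo a b, s • α + F s ∈ U)
    (hS0 : S 0 = 0)
    (hS1 : iteratedFDerivWithin ℝ 1 S U 0 = 0)
    (hS2 : ∀ ξ : E, iteratedFDerivWithin ℝ 2 S U 0 ![α, ξ] = 0)
    (hF0 : F 0 = 0) (hF1 : derivWithin F (Set.Ioo a b) 0 = 0) :
    iteratedDerivWithin 4 (fun t => S (t • α + F t)) (Set.Ioo a b) 0 =
      iteratedFDerivWithin ℝ 4 S U 0 ![α, α, α, α] +
      6 * iteratedFDerivWithin ℝ 3 S U 0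
          ![α, α, iteratedDerivWithin 2 F (Set.Ioo a b) 0] +
      3 * iteratedFDerivWithin ℝ 2 S U 0
          ![iteratedDerivWithin 2 F (Set.Ioo a b) 0,
            iteratedDerivWithin 2 F (Set.Ioo a b) 0] := by
  classical
  set D1 : E → E →L[ℝ] ℝ := fderiv ℝ S with hD1def
  set D2 : E → E →L[ℝ] E →L[ℝ] ℝ := fderiv ℝ D1 with hD2def
  letI : NormedAddCommGroup (E →L[ℝ] E →L[ℝ] ℝ) := inferInstance
  letI : NormedSpace ℝ (E →L[ℝ] E →L[ℝ] ℝ) := inferInstance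
  set D3 := fderiv ℝ D2 with hD3def
  set D4 := fderiv ℝ D3 with hD4def
  set g : ℝ → E := fun t => t • α + F t with hgdef
  set I : Set ℝ := Set.Ioo a b with hIdef
  have hIo : IsOpen I := isOpen_Ioo
  have h0I : (0 : ℝ) ∈ I := hab
  -- smoothness of derivatives of S
  have hS4 : ContDiffOn ℝ 4 S U := hS.of_le (WithTop.coe_le_coe.mpr le_top)
  have hD1s : ContDiffOn ℝ 3 D1 U := hS4.fderiv_of_isOpen hU (by norm_num)
  have hD2s : ContDiffOn ℝ 2 D2 U := hD1s.fderiv_of_isOpen hU (by norm_num)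
  have hD3s : ContDiffOn ℝ 1 D3 U := hD2s.fderiv_of_isOpen hU (by norm_num)
  have hd1 : ∀ x ∈ U, HasFDerivAt S (D1 x) x := fun x hx =>
    ((hS4.contDiffAt (hU.mem_nhds hx)).differentiableAt (by norm_num)).hasFDerivAt
  have hd2 : ∀ x ∈ U, HasFDerivAt D1 (D2 x) x := fun x hx =>
    ((hD1s.contDiffAt (hU.mem_nhds hx)).differentiableAt (by norm_num)).hasFDerivAt
  have hd3 : ∀ x ∈ U, HasFDerivAt D2 (D3 x) x := fun x hx =>
    ((hD2s.contDiffAt (hU.mem_nhds hx)).differentiableAt (by norm_num)).hasFDerivAt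
  have hd4 : ∀ x ∈ U, HasFDerivAt D3 (D4 x) x := fun x hx =>
    ((hD3s.contDiffAt (hU.mem_nhds hx)).differentiableAt (by norm_num)).hasFDerivAt
  -- curve derivatives
  have hF4 : ContDiffOn ℝ 4 F I := hF.of_le (WithTop.coe_le_coe.mpr le_top)
  have hdF1s : ContDiffOn ℝ 3 (deriv F) I := hF4.deriv_of_isOpen hIo (by norm_num)
  have hdF2s : ContDiffOn ℝ 2 (deriv (deriv F)) I := hdF1s.deriv_of_isOpen hIo (by norm_num)
  have hdF3s : ContDiffOn ℝ 1 (deriv (deriv (deriv F))) I := hdF2s.deriv_of_isOpen hIo (by norm_num)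
  set g1 : ℝ → E := fun t => α + deriv F t with hg1def
  set g2 : ℝ → E := deriv (deriv F) with hg2def
  set g3 : ℝ → E := deriv (deriv (deriv F)) with hg3def
  have hγ : ∀ t ∈ I, HasDerivAt g (g1 t) t := by
    intro t ht
    have h1 : HasDerivAt (fun u : ℝ => u • α) ((1 : ℝ) • α) t := (hasDerivAt_id t).smul_const α
    have h2 : HasDerivAt F (deriv F t) t :=
      ((hF4.contDiffAt (hIo.mem_nhds ht)).differentiableAt (by norm_num)).hasDerivAt
    have h3 := h1.add h2
    rw [one_smul] at h3
    exact h3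
  have hγ1 : ∀ t ∈ I, HasDerivAt g1 (g2 t) t := fun t ht =>
    HasDerivAt.const_add α
      ((hdF1s.contDiffAt (hIo.mem_nhds ht)).differentiableAt (by norm_num)).hasDerivAt
  have hγ2 : ∀ t ∈ I, HasDerivAt g2 (g3 t) t := fun t ht =>
    ((hdF2s.contDiffAt (hIo.mem_nhds ht)).differentiableAt (by norm_num)).hasDerivAt
  have hγ3 : ∀ t ∈ I, HasDerivAt g3 (deriv g3 t) t := fun t ht =>
    ((hdF3s.contDiffAt (hIo.mem_nhds ht)).differentiableAt (by norm_num)).hasDerivAt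
  -- the good set
  have hgc : ContinuousOn g I :=
    ((continuous_id.smul continuous_const).continuousOn).add hF.continuousOn
  set V : Set ℝ := I ∩ g ⁻¹' U with hVdef
  have hVo : IsOpen V := hgc.isOpen_inter_preimage hIo hU
  have hg0 : g 0 = 0 := by simp [hgdef, hF0]
  have h0V : (0 : ℝ) ∈ V := ⟨h0I, by simp [mem_preimage, hg0, hU0]⟩
  -- composed chains
  have c1 : ∀ t ∈ V, HasDerivAt (fun u => D1 (g u)) (D2 (g t) (g1 t)) t := fun t ht =>
    (hd2 _ ht.2).comp_hasDerivAt t (hγ t ht.1)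
  have c2 : ∀ t ∈ V, HasDerivAt (fun u => D2 (g u)) (D3 (g t) (g1 t)) t := fun t ht =>
    (hd3 _ ht.2).comp_hasDerivAt t (hγ t ht.1)
  have c3 : ∀ t ∈ V, HasDerivAt (fun u => D3 (g u)) (D4 (g t) (g1 t)) t := fun t ht =>
    (hd4 _ ht.2).comp_hasDerivAt t (hγ t ht.1)
  set φ1 : ℝ → ℝ := fun t => D1 (g t) (g1 t) with hφ1def
  set φ2 : ℝ → ℝ := fun t => D2 (g t) (g1 t) (g1 t) + D1 (g t) (g2 t) with hφ2def
  set φ3 : ℝ → ℝ := fun t =>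
    D3 (g t) (g1 t) (g1 t) (g1 t) + D2 (g t) (g2 t) (g1 t)
      + (D2 (g t) (g1 t) (g2 t) + D2 (g t) (g1 t) (g2 t)) + D1 (g t) (g3 t) with hφ3def
  have H0 : ∀ t ∈ V, HasDerivAt (fun u => S (g u)) (φ1 t) t := fun t ht =>
    (hd1 _ ht.2).comp_hasDerivAt t (hγ t ht.1)
  have H1 : ∀ t ∈ V, HasDerivAt φ1 (φ2 t) t := fun t ht =>
    (c1 t ht).clm_apply (hγ1 t ht.1)
  have H2 : ∀ t ∈ V, HasDerivAt φ2 (φ3 t) t := by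
    intro t ht
    have tA := ((c2 t ht).clm_apply (hγ1 t ht.1)).clm_apply (hγ1 t ht.1)
    have tB := (c1 t ht).clm_apply (hγ2 t ht.1)
    have h := tA.add tB
    convert h using 1
    · rfl
    · rfl
    · rfl
    simp only [hφ3def, ContinuousLinearMap.add_apply]
    ring
  -- fourth derivative at 0
  have T1 := (((c3 0 h0V).clm_apply (hγ1 0 h0I)).clm_apply (hγ1 0 h0I)).clm_apply (hγ1 0 h0I)
  have T2 := ((c2 0 h0V).clm_apply (hγ2 0 h0I)).clm_apply (hγ1 0 h0I)
  have T3 := ((c2 0 h0V).clm_apply (hγ1 0 h0I)).clm_apply (hγ2 0 h0I)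
  have T4 := (c1 0 h0V).clm_apply (hγ3 0 h0I)
  have H3 : HasDerivAt φ3 _ 0 := ((T1.add T2).add (T3.add T3)).add T4
  -- iterated derivatives agree with the φ chain on V
  have E1 : Set.EqOn (deriv^[1] (fun t => S (g t))) φ1 V := fun t ht => by
    simpa using (H0 t ht).deriv
  have E2 : Set.EqOn (deriv^[2] (fun t => S (g t))) φ2 V := by
    intro t ht
    have heq : deriv^[1] (fun t => S (g t)) =ᶠ[nhds t] φ1 :=
      eventuallyEq_of_mem (hVo.mem_nhds ht) E1
    calc deriv^[2] (fun t => S (g t)) t = deriv (deriv^[1] fun t => S (g t)) t :=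
          congrFun (Function.iterate_succ_apply' deriv 1 _) t
      _ = deriv φ1 t := heq.deriv_eq
      _ = φ2 t := (H1 t ht).deriv
  have E3 : Set.EqOn (deriv^[3] (fun t => S (g t))) φ3 V := by
    intro t ht
    have heq : deriv^[2] (fun t => S (g t)) =ᶠ[nhds t] φ2 :=
      eventuallyEq_of_mem (hVo.mem_nhds ht) E2
    calc deriv^[3] (fun t => S (g t)) t = deriv (deriv^[2] fun t => S (g t)) t :=
          congrFun (Function.iterate_succ_apply' deriv 2 _) t
      _ = deriv φ2 t := heq.deriv_eq
      _ = φ3 t := (H2 t ht).deriv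
  have E4 : deriv^[4] (fun t => S (g t)) 0 = deriv φ3 0 := by
    have heq : deriv^[3] (fun t => S (g t)) =ᶠ[nhds 0] φ3 :=
      eventuallyEq_of_mem (hVo.mem_nhds h0V) E3
    calc deriv^[4] (fun t => S (g t)) 0 = deriv (deriv^[3] fun t => S (g t)) 0 :=
          congrFun (Function.iterate_succ_apply' deriv 3 _) 0
      _ = deriv φ3 0 := heq.deriv_eq
  -- values at 0
  have hdF0 : deriv F 0 = 0 := by rw [← derivWithin_of_isOpen hIo h0I]; exact hF1
  have hg10 : g1 0 = α := by simp [hg1def, hdF0]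
  -- vanishing and symmetry facts at 0
  have hD1z : D1 0 = 0 := by
    ext ξ
    have h1 : iteratedFDeriv ℝ 1 S 0 ![ξ] = D1 0 ξ := by
      rw [iteratedFDeriv_one_apply]; simp; rfl
    rw [← h1, ← iteratedFDerivWithin_of_isOpen (f := S) 1 hU hU0, hS1]
    simp
  have R2 : ∀ v w : E, iteratedFDerivWithin ℝ 2 S U 0 ![v, w] = D2 0 v w := fun v w => by
    rw [iteratedFDerivWithin_of_isOpen (f := S) 2 hU hU0, iteratedFDeriv_two_apply]
    simp
    rfl
  have R3 : ∀ u v w : E, iteratedFDerivWithin ℝ 3 S U 0 ![u, v, w] = D3 0 u v w := fun u v w => by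
    rw [iteratedFDerivWithin_of_isOpen (f := S) 3 hU hU0, iteratedFDeriv_succ_apply_right,
      iteratedFDeriv_two_apply]
    simp [Fin.init, Fin.last]
    rfl
  have R4 : ∀ u v w x' : E, iteratedFDerivWithin ℝ 4 S U 0 ![u, v, w, x'] = D4 0 u v w x' := by
    intro u v w x'
    rw [iteratedFDerivWithin_of_isOpen (f := S) 4 hU hU0, iteratedFDeriv_succ_apply_right,
      iteratedFDeriv_succ_apply_right, iteratedFDeriv_two_apply]
    have hc : Fin.castSucc (2 : Fin 3) = (2 : Fin 4) := rfl
    simp [Fin.init, Fin.last, hc]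
    rfl
  have hD2α : ∀ ξ : E, D2 0 α ξ = 0 := fun ξ => by rw [← R2]; exact hS2 ξ
  have symS : ∀ y ∈ U, ∀ v w : E, D2 y v w = D2 y w v := fun y hy v w =>
    ((hS4.contDiffAt (hU.mem_nhds hy)).isSymmSndFDerivAt (by norm_num)).eq v w
  have hD2αr : ∀ ξ : E, D2 0 ξ α = 0 := fun ξ => (symS 0 hU0 ξ α).trans (hD2α ξ)
  have symm3a : ∀ u v w : E, D3 0 u v w = D3 0 v u w := fun u v w => by
    have h : D3 0 u v = D3 0 v u :=
      ((hD1s.contDiffAt (hU.mem_nhds hU0)).isSymmSndFDerivAt (by norm_num)).eq u v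
    exact DFunLike.congr_fun h w
  have symm3b : ∀ u v w : E, D3 0 u v w = D3 0 u w v := by
    intro u v w
    have hd3at0 : HasFDerivAt D2 (D3 0) 0 := hd3 0 hU0
    let Lvw : (E →L[ℝ] E →L[ℝ] ℝ) →L[ℝ] ℝ :=
      (ContinuousLinearMap.apply ℝ ℝ w).comp (ContinuousLinearMap.apply ℝ (E →L[ℝ] ℝ) v)
    let Lwv : (E →L[ℝ] E →L[ℝ] ℝ) →L[ℝ] ℝ :=
      (ContinuousLinearMap.apply ℝ ℝ v).comp (ContinuousLinearMap.apply ℝ (E →L[ℝ] ℝ) w)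
    have e1 : HasFDerivAt (⇑Lvw ∘ D2) (Lvw.comp (D3 0)) 0 :=
      Lvw.hasFDerivAt.comp 0 hd3at0
    have e2 : HasFDerivAt (⇑Lwv ∘ D2) (Lwv.comp (D3 0)) 0 :=
      Lwv.hasFDerivAt.comp 0 hd3at0
    have f1 : fderiv ℝ (fun y => D2 y v w) 0 = Lvw.comp (D3 0) := e1.fderiv
    have f2 : fderiv ℝ (fun y => D2 y w v) 0 = Lwv.comp (D3 0) := e2.fderiv
    have heq : (fun y => D2 y v w) =ᶠ[nhds (0 : E)] fun y => D2 y w v := by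
      filter_upwards [hU.mem_nhds hU0] with y hy using symS y hy v w
    have hcomp : Lvw.comp (D3 0) = Lwv.comp (D3 0) := by
      rw [← f1, ← f2]; exact heq.fderiv_eq
    exact DFunLike.congr_fun hcomp u
  -- translate the goal
  have hβ : iteratedDerivWithin 2 F I 0 = g2 0 := by
    rw [iteratedDerivWithin_eq_iteratedFDerivWithin,
      iteratedFDerivWithin_of_isOpen (f := F) 2 hIo h0I, ← iteratedDeriv_eq_iteratedFDeriv,
      iteratedDeriv_succ, iteratedDeriv_one]
  have hL : iteratedDerivWithin 4 (fun t => S (t • α + F t)) I 0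
      = deriv^[4] (fun t => S (g t)) 0 := by
    show iteratedDerivWithin 4 (fun t => S (g t)) I 0 = _
    rw [iteratedDerivWithin_eq_iteratedFDerivWithin,
      iteratedFDerivWithin_of_isOpen 4 hIo h0I, ← iteratedDeriv_eq_iteratedFDeriv,
      iteratedDeriv_eq_iterate]
  rw [hβ]
  rw [R4]
  rw [R3]
  rw [R2]
  rw [hL]
  rw [E4]
  rw [H3.deriv]
  have s1 : D3 0 (g2 0) α α = D3 0 α α (g2 0) :=
    (symm3a _ _ _).trans (symm3b α (g2 0) α)
  have s2 : D3 0 α (g2 0) α = D3 0 α α (g2 0) := symm3b α (g2 0) α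
  simp only [hg0, hg10, ContinuousLinearMap.add_apply, hD1z, ContinuousLinearMap.zero_apply,
    hD2α, hD2αr, s1, s2]
  ring
end

section
/- For n ≥ 2, the value r⁽ⁿ⁾(0) of the n-th derivative of r(s) = S(sα + F(s)) at 0 depends only on the derivatives F″(0), …, F⁽ⁿ⁻²⁾(0) (the (n−2)-jet of F), i.e. it is independent of F⁽ⁿ⁻¹⁾(0) and F⁽ⁿ⁾(0), provided S(0)=0, S⁽¹⁾(0)=0, S⁽²⁾(0)(α,·)=0, F(0)=0, and F′(0)=0. -/
open Set

section CurveLemmas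

variable {E : Type*} [NormedAddCommGroup E] [NormedSpace ℝ E]

private lemma curve_deriv_one {a b : ℝ} (hab : (0:ℝ) ∈ Set.Ioo a b) (α : E) {H : ℝ → E}
    (hH : ContDiffOn ℝ (⊤ : ℕ∞) H (Set.Ioo a b)) (hH1 : derivWithin H (Set.Ioo a b) 0 = 0) :
    iteratedDerivWithin 1 (fun s => s • α + H s) (Set.Ioo a b) 0 = α := by
  have hIu : UniqueDiffOn ℝ (Set.Ioo a b) := isOpen_Ioo.uniqueDiffOn
  rw [iteratedDerivWithin_one]
  have h1 : HasDerivWithinAt (fun s : ℝ => s • α) α (Set.Ioo a b) 0 := by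
    simpa using ((hasDerivAt_id (0:ℝ)).smul_const α).hasDerivWithinAt
  have h2 : DifferentiableWithinAt ℝ H (Set.Ioo a b) 0 :=
    (hH.differentiableOn (by simp)) 0 hab
  have h3 := (h1.add h2.hasDerivWithinAt).derivWithin (hIu 0 hab)
  rw [show (fun s => s • α + H s) = (fun s : ℝ => s • α) + H from rfl, h3, hH1, add_zero]

private lemma curve_deriv_high {a b : ℝ} (hab : (0:ℝ) ∈ Set.Ioo a b) (α : E) {H : ℝ → E}
    (hH : ContDiffOn ℝ (⊤ : ℕ∞) H (Set.Ioo a b)) {k : ℕ} (hk : 2 ≤ k) :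
    iteratedDerivWithin k (fun s => s • α + H s) (Set.Ioo a b) 0 =
      iteratedDerivWithin k H (Set.Ioo a b) 0 := by
  have hIu : UniqueDiffOn ℝ (Set.Ioo a b) := isOpen_Ioo.uniqueDiffOn
  have hlin : ContDiffOn ℝ (⊤ : ℕ∞) (fun s : ℝ => s • α) (Set.Ioo a b) :=
    (contDiff_id.smul contDiff_const).contDiffOn
  have hadd : iteratedDerivWithin k ((fun s : ℝ => s • α) + H) (Set.Ioo a b) 0 =
      iteratedDerivWithin k (fun s : ℝ => s • α) (Set.Ioo a b) 0
        + iteratedDerivWithin k H (Set.Ioo a b) 0 :=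
    iteratedDerivWithin_add hab hIu ((hlin 0 hab).of_le (by exact_mod_cast le_top)) ((hH 0 hab).of_le (by exact_mod_cast le_top))
  have hzero : iteratedDerivWithin k (fun s : ℝ => s • α) (Set.Ioo a b) 0 = 0 := by
    obtain ⟨m, rfl⟩ : ∃ m, k = m + 1 := ⟨k - 1, by omega⟩
    rw [iteratedDerivWithin_succ']
    have heq : Set.EqOn (derivWithin (fun s : ℝ => s • α) (Set.Ioo a b))
        (fun _ => α) (Set.Ioo a b) := by
      intro x hx
      simpa using (((hasDerivAt_id x).smul_const α).hasDerivWithinAt.derivWithin (hIu x hx))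
    rw [iteratedDerivWithin_congr heq hab]
    have hm : m ≠ 0 := by omega
    rw [iteratedDerivWithin_eq_iteratedFDerivWithin,
      iteratedFDerivWithin_const_of_ne hm α (Set.Ioo a b)]
    simp
  have : iteratedDerivWithin k (fun s => s • α + H s) (Set.Ioo a b) 0 =
      iteratedDerivWithin k ((fun s : ℝ => s • α) + H) (Set.Ioo a b) 0 := rfl
  rw [this, hadd, hzero, zero_add]

end CurveLemmas

/-- for `n ≥ 2`, the value `r⁽ⁿ⁾(0)` of the `n`-th derivative of
`r(s) = S(sα+F(s))` at `0` depends only on the `(n-2)`-jet of `F` at `0`: if `F` and `G`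
satisfy the hypotheses and have equal derivatives of orders `2,…,n-2` at `0`, then the `n`-th
derivatives of `s ↦ S(sα+F(s))` and `s ↦ S(sα+G(s))` at `0` agree. -/
theorem nthDeriv_comp_curve_depends_only_on_jet
    {E : Type*} [NormedAddCommGroup E] [NormedSpace ℝ E] [CompleteSpace E]
    (U : Set E) (hU : IsOpen U) (hU0 : (0 : E) ∈ U)
    (S : E → ℝ) (hS : ContDiffOn ℝ (⊤ : ℕ∞) S U)
    (a b : ℝ) (hab : (0 : ℝ) ∈ Set.Ioo a b)
    (F G : ℝ → E)
    (hF : ContDiffOn ℝ (⊤ : ℕ∞) F (Set.Ioo a b)) (hG : ContDiffOn ℝ (⊤ : ℕ∞) G (Set.Ioo a b))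
    (α : E)
    (hmemF : ∀ s ∈ Set.Ioo a b, s • α + F s ∈ U)
    (hmemG : ∀ s ∈ Set.Ioo a b, s • α + G s ∈ U)
    (hS0 : S 0 = 0)
    (hS1 : iteratedFDerivWithin ℝ 1 S U 0 = 0)
    (hS2 : ∀ ξ : E, iteratedFDerivWithin ℝ 2 S U 0 ![α, ξ] = 0)
    (hF0 : F 0 = 0) (hF1 : derivWithin F (Set.Ioo a b) 0 = 0)
    (hG0 : G 0 = 0) (hG1 : derivWithin G (Set.Ioo a b) 0 = 0)
    (n : ℕ) (hn : 2 ≤ n)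
    (hjet : ∀ k, 2 ≤ k → k ≤ n - 2 →
      iteratedDerivWithin k F (Set.Ioo a b) 0 = iteratedDerivWithin k G (Set.Ioo a b) 0) :
    iteratedDerivWithin n (fun s => S (s • α + F s)) (Set.Ioo a b) 0 =
      iteratedDerivWithin n (fun s => S (s • α + G s)) (Set.Ioo a b) 0 := by
  classical
  have hIu : UniqueDiffOn ℝ (Set.Ioo a b) := isOpen_Ioo.uniqueDiffOn
  have hUu : UniqueDiffOn ℝ U := hU.uniqueDiffOn
  have hlin : ContDiffOn ℝ (⊤ : ℕ∞) (fun s : ℝ => s • α) (Set.Ioo a b) :=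
    (contDiff_id.smul contDiff_const).contDiffOn
  have hcF : ContDiffOn ℝ (⊤ : ℕ∞) (fun s : ℝ => s • α + F s) (Set.Ioo a b) := hlin.add hF
  have hcG : ContDiffOn ℝ (⊤ : ℕ∞) (fun s : ℝ => s • α + G s) (Set.Ioo a b) := hlin.add hG
  -- Faà di Bruno expansion of both sides
  have key : ∀ (H : ℝ → E), ContDiffOn ℝ (⊤ : ℕ∞) (fun s : ℝ => s • α + H s) (Set.Ioo a b) →
      H 0 = 0 → (∀ s ∈ Set.Ioo a b, s • α + H s ∈ U) →
      iteratedDerivWithin n (fun s => S (s • α + H s)) (Set.Ioo a b) 0 =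
        ∑ c : OrderedFinpartition n,
          iteratedFDerivWithin ℝ c.length S U 0
            (fun m => iteratedDerivWithin (c.partSize m)
              (fun s : ℝ => s • α + H s) (Set.Ioo a b) 0) := by
    intro H hcH hH0 hmem
    have hT := (hS.ftaylorSeriesWithin hUu).comp (hcH.ftaylorSeriesWithin hIu)
      (fun s hs => hmem s hs)
    have h1 := hT.eq_iteratedFDerivWithin_of_uniqueDiffOn (m := n) (by exact_mod_cast le_top) hIu hab
    have h2 : ((ftaylorSeriesWithin ℝ S U ((0:ℝ) • α + H 0)).taylorComp
        (ftaylorSeriesWithin ℝ (fun s : ℝ => s • α + H s) (Set.Ioo a b) 0)) n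
        = iteratedFDerivWithin ℝ n (fun s => S (s • α + H s)) (Set.Ioo a b) 0 := h1
    rw [iteratedDerivWithin_eq_iteratedFDerivWithin, ← h2]
    have hbase : (0:ℝ) • α + H 0 = 0 := by simp [hH0]
    rw [hbase]
    simp only [FormalMultilinearSeries.taylorComp, ContinuousMultilinearMap.sum_apply,
      FormalMultilinearSeries.compAlongOrderedFinpartition_apply,
      OrderedFinpartition.applyOrderedFinpartition_apply]
    rfl
  rw [key F hcF hF0 hmemF, key G hcG hG0 hmemG]
  -- symmetry of the second derivative
  have hsym : ∀ x y : E, iteratedFDerivWithin ℝ 2 S U 0 ![x, y]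
      = iteratedFDerivWithin ℝ 2 S U 0 ![y, x] := by
    have h := (hS.contDiffWithinAt hU0).isSymmSndFDerivWithinAt (by rw [minSmoothness_of_isRCLikeNormedField]; exact WithTop.coe_le_coe.mpr le_top) hUu
      (by rw [hU.interior_eq]; exact subset_closure hU0) hU0
    intro x y
    rw [iteratedFDerivWithin_two_apply S hUu hU0, iteratedFDerivWithin_two_apply S hUu hU0]
    simpa using h.eq x y
  -- vanishing of terms with a block of size n (via S'(0)=0)
  have haux1 : ∀ (k : ℕ), k = 1 → ∀ v : Fin k → E,
      iteratedFDerivWithin ℝ k S U 0 v = 0 := by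
    rintro k rfl v
    rw [hS1]
    simp
  -- vanishing of terms with a block of size n-1 (via S''(0)(α,·)=0)
  have haux2 : ∀ (k : ℕ), k = 2 → ∀ (v : Fin k → E) (i : Fin k),
      (∀ j, j ≠ i → v j = α) → iteratedFDerivWithin ℝ k S U 0 v = 0 := by
    rintro k rfl v i hv
    have hv2 : v = ![v 0, v 1] := by
      funext j; fin_cases j <;> rfl
    fin_cases i
    · have h1 : v 1 = α := hv 1 (by decide)
      rw [hv2, h1, hsym]
      exact hS2 (v 0)
    · have h0 : v 0 = α := hv 0 (by decide)
      rw [hv2, h0]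
      exact hS2 (v 1)
  refine Finset.sum_congr rfl (fun c _ => ?_)
  have hsum : ∑ i, c.partSize i = n := by
    have := Fintype.card_congr c.equivSigma
    simpa using this
  have hd1F : iteratedDerivWithin 1 (fun s : ℝ => s • α + F s) (Set.Ioo a b) 0 = α :=
    curve_deriv_one hab α hF hF1
  have hd1G : iteratedDerivWithin 1 (fun s : ℝ => s • α + G s) (Set.Ioo a b) 0 = α :=
    curve_deriv_one hab α hG hG1
  have hd2 : ∀ k, 2 ≤ k → k ≤ n - 2 →
      iteratedDerivWithin k (fun s : ℝ => s • α + F s) (Set.Ioo a b) 0 =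
      iteratedDerivWithin k (fun s : ℝ => s • α + G s) (Set.Ioo a b) 0 := by
    intro k h2 hk
    rw [curve_deriv_high hab α hF h2, curve_deriv_high hab α hG h2]
    exact hjet k h2 hk
  have hpos : ∀ m, 0 < c.partSize m := c.partSize_pos
  by_cases hbig : ∀ m, c.partSize m = 1 ∨ c.partSize m ≤ n - 2
  · congr 1
    funext m
    rcases hbig m with h | h
    · rw [h, hd1F, hd1G]
    · rcases Nat.lt_or_ge (c.partSize m) 2 with h2 | h2
      · have h1 : c.partSize m = 1 := by have := hpos m; omega
        rw [h1, hd1F, hd1G]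
      · exact hd2 _ h2 h
  · push_neg at hbig
    obtain ⟨m, hm1, hm2⟩ := hbig
    have h2m : 2 ≤ c.partSize m := by have := hpos m; omega
    have herase : c.partSize m + ∑ i ∈ Finset.univ.erase m, c.partSize i = n := by
      have h := Finset.add_sum_erase Finset.univ c.partSize (Finset.mem_univ m)
      rw [hsum] at h
      exact h
    have hcard : c.length - 1 ≤ ∑ i ∈ Finset.univ.erase m, c.partSize i := by
      have h1 := Finset.card_nsmul_le_sum (Finset.univ.erase m) c.partSize 1
        (fun i _ => hpos i)
      have h2 : (Finset.univ.erase m).card = c.length - 1 := by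
        rw [Finset.card_erase_of_mem (Finset.mem_univ m)]
        simp
      simpa [h2] using h1
    have hle : c.partSize m ≤ n := by
      have := herase; omega
    rcases Nat.lt_or_ge (c.partSize m) n with hlt | hge
    · -- c.partSize m = n - 1, so c.length = 2 and the other block has size 1
      have hkval : c.partSize m = n - 1 := by omega
      have hes : ∑ i ∈ Finset.univ.erase m, c.partSize i = 1 := by omega
      have hlpos : 0 < c.length := c.length_pos (by omega)
      have hlen2 : c.length = 2 := by
        rcases Nat.lt_or_ge c.length 2 with hl | hl
        · exfalso
          have hl1 : c.length = 1 := by omega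
          have : (Finset.univ.erase m).card = 0 := by
            rw [Finset.card_erase_of_mem (Finset.mem_univ m)]
            simp [hl1]
          have hempty : (Finset.univ.erase m) = ∅ := Finset.card_eq_zero.mp this
          rw [hempty] at hes
          simp at hes
        · omega
      have hother : ∀ j, j ≠ m → c.partSize j = 1 := by
        intro j hj
        have hjin : j ∈ Finset.univ.erase m := by simp [hj]
        have h1 : c.partSize j ≤ ∑ i ∈ Finset.univ.erase m, c.partSize i :=
          Finset.single_le_sum (fun i _ => Nat.zero_le _) hjin
        have := hpos j; omega
      rw [haux2 c.length hlen2 _ m (fun j hj => by rw [hother j hj]; exact hd1F),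
        haux2 c.length hlen2 _ m (fun j hj => by rw [hother j hj]; exact hd1G)]
    · -- c.partSize m = n, so c.length = 1
      have hkval : c.partSize m = n := by omega
      have hes : ∑ i ∈ Finset.univ.erase m, c.partSize i = 0 := by omega
      have hlpos : 0 < c.length := c.length_pos (by omega)
      have hlen1 : c.length = 1 := by omega
      rw [haux1 c.length hlen1, haux1 c.length hlen1]
end

section
/- In the setting of the splitting construction, the second derivative of the implicitly defined map F at 0 satisfies, for all ξ ∈ range T: S⁽³⁾(0)(ξ, α, α) + S⁽²⁾(0)(ξ, F″(0)) = 0, and this equation determines F″(0) uniquely in range T. -/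
open Filter Set Topology

private lemma derivWithin_mem_of_closed {E : Type*} [NormedAddCommGroup E] [NormedSpace ℝ E]
    {p : Submodule ℝ E} (hp : IsClosed (p : Set E)) {f : ℝ → E} {s : Set ℝ} (hs : IsOpen s)
    {x : ℝ} (hx : x ∈ s) (hmem : ∀ y ∈ s, f y ∈ p)
    (hd : DifferentiableWithinAt ℝ f s x) : derivWithin f s x ∈ p := by
  have h := hd.hasDerivWithinAt
  rw [hasDerivWithinAt_iff_tendsto_slope] at h
  have hne : (𝓝[s \ {x}] x).NeBot := by
    have : s \ {x} = {x}ᶜ ∩ s := by rw [Set.inter_comm]; rfl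
    rw [this, ← nhdsWithin_restrict' _ (hs.mem_nhds hx)]
    exact NormedField.nhdsNE_neBot x
  refine hp.mem_of_tendsto h (Filter.eventually_of_mem self_mem_nhdsWithin fun y hy => ?_)
  have : slope f x y = (y - x)⁻¹ • (f y - f x) := by simp [slope, vsub_eq_sub]
  rw [this]
  exact p.smul_mem _ (p.sub_mem (hmem y hy.1) (hmem x hx))

set_option maxHeartbeats 1000000 in
/-- in the splitting construction, the second derivative of the implicitly
defined `F` at `0` satisfies `S⁽³⁾(0)(ξ,α,α) + S⁽²⁾(0)(ξ,F″(0)) = 0` for all `ξ ∈ range T`,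
and this equation determines `F″(0)` uniquely in `range T`. -/
theorem splitting_secondDeriv_equation
    {E : Type*} [NormedAddCommGroup E] [NormedSpace ℝ E] [CompleteSpace E]
    (B : E →L[ℝ] E →L[ℝ] ℝ)
    (hBsymm : ∀ u v : E, B u v = B v u)
    (hBpos : ∀ u : E, u ≠ 0 → 0 < B u u)
    (U : Set E) (hU : IsOpen U) (hU0 : (0 : E) ∈ U)
    (S : E → ℝ) (hS : ContDiffOn ℝ (⊤ : ℕ∞) S U)
    (hS0 : S 0 = 0) (hS1 : fderivWithin ℝ S U 0 = 0)
    (T : E →L[ℝ] E)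
    (hrange : IsClosed (LinearMap.range (T : E →ₗ[ℝ] E) : Set E))
    (hcoker : FiniteDimensional ℝ (E ⧸ LinearMap.range (T : E →ₗ[ℝ] E)))
    (hindex : Module.finrank ℝ (LinearMap.ker (T : E →ₗ[ℝ] E)) =
      Module.finrank ℝ (E ⧸ LinearMap.range (T : E →ₗ[ℝ] E)))
    (hTsymm : ∀ u v : E, B (T u) v = B u (T v))
    (α : E) (hα : α ≠ 0)
    (hker : LinearMap.ker (T : E →ₗ[ℝ] E) = Submodule.span ℝ {α})
    (hS2 : ∀ u v : E, iteratedFDerivWithin ℝ 2 S U 0 ![u, v] = B (T u) v)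
    (a b : ℝ) (hab : (0 : ℝ) ∈ Set.Ioo a b)
    (F : ℝ → E) (hF : ContDiffOn ℝ (⊤ : ℕ∞) F (Set.Ioo a b))
    (hF0 : F 0 = 0) (hF1 : derivWithin F (Set.Ioo a b) 0 = 0)
    (hFsol : ∀ s ∈ Set.Ioo a b,
      F s ∈ LinearMap.range (T : E →ₗ[ℝ] E) ∧
      s • α + F s ∈ U ∧
      ∀ ξ ∈ LinearMap.range (T : E →ₗ[ℝ] E),
        fderivWithin ℝ S U (s • α + F s) ξ = 0) :
    iteratedDerivWithin 2 F (Set.Ioo a b) 0 ∈ LinearMap.range (T : E →ₗ[ℝ] E) ∧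
    (∀ ξ ∈ LinearMap.range (T : E →ₗ[ℝ] E),
      iteratedFDerivWithin ℝ 3 S U 0 ![ξ, α, α] +
        iteratedFDerivWithin ℝ 2 S U 0 ![ξ, iteratedDerivWithin 2 F (Set.Ioo a b) 0] = 0) ∧
    ∀ w ∈ LinearMap.range (T : E →ₗ[ℝ] E),
      (∀ ξ ∈ LinearMap.range (T : E →ₗ[ℝ] E),
        iteratedFDerivWithin ℝ 3 S U 0 ![ξ, α, α] +
          iteratedFDerivWithin ℝ 2 S U 0 ![ξ, w] = 0) →
      w = iteratedDerivWithin 2 F (Set.Ioo a b) 0 := by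
  classical
  set I : Set ℝ := Set.Ioo a b with hIdef
  have hIopen : IsOpen I := isOpen_Ioo
  set p : Submodule ℝ E := LinearMap.range (T : E →ₗ[ℝ] E) with hpdef
  have h0I : (0 : ℝ) ∈ I := hab
  -- basic smoothness facts
  have hSat : ∀ x ∈ U, ContDiffAt ℝ (⊤ : ℕ∞) S x := fun x hx => hS.contDiffAt (hU.mem_nhds hx)
  have hFat : ∀ s ∈ I, ContDiffAt ℝ (⊤ : ℕ∞) F s := fun s hs => hF.contDiffAt (hIopen.mem_nhds hs)
  have hFd : ContDiffOn ℝ (⊤ : ℕ∞) (derivWithin F I) I :=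
    hF.derivWithin hIopen.uniqueDiffOn (by simp)
  -- the second derivative of F at 0, as derivWithin of derivWithin
  have hw0 : iteratedDerivWithin 2 F I 0 = derivWithin (derivWithin F I) I 0 := by
    rw [iteratedDerivWithin_succ]
    apply derivWithin_congr
    · intro y hy; exact congrFun iteratedDerivWithin_one y
    · exact congrFun iteratedDerivWithin_one 0
  set w₀ : E := iteratedDerivWithin 2 F I 0 with hw0def
  -- Part 1 : membership
  have hmem1 : ∀ s ∈ I, derivWithin F I s ∈ p := fun s hs =>
    derivWithin_mem_of_closed hrange hIopen hs (fun y hy => (hFsol y hy).1)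
      ((hF.differentiableOn (by simp)) s hs)
  have hmemw0 : w₀ ∈ p := by
    have h := derivWithin_mem_of_closed hrange hIopen h0I hmem1
      ((hFd.differentiableOn (by simp)) 0 h0I)
    rw [← hw0] at h
    exact h
  -- notation for higher derivatives of S
  set P : E → E →L[ℝ] E →L[ℝ] ℝ := fun y => fderiv ℝ (fderiv ℝ S) y with hPdef
  set D3 : E →L[ℝ] E →L[ℝ] E →L[ℝ] ℝ := fderiv ℝ P 0 with hD3def
  have hSdat : ∀ x ∈ U, ContDiffAt ℝ (⊤ : ℕ∞) (fderiv ℝ S) x := fun x hx =>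
    (hSat x hx).fderiv_right (by simp)
  have hPat : ∀ x ∈ U, ContDiffAt ℝ (⊤ : ℕ∞) P x := fun x hx =>
    (hSdat x hx).fderiv_right (by simp)
  -- the curve γ
  set γ : ℝ → E := fun s => s • α + F s with hγdef
  have hγ0 : γ 0 = 0 := by simp [hγdef, hF0]
  have hγU : ∀ s ∈ I, γ s ∈ U := fun s hs => (hFsol s hs).2.1
  have hγd : ∀ s ∈ I, HasDerivAt γ (α + deriv F s) s := by
    intro s hs
    have h1 : HasDerivAt (fun t : ℝ => t • α) ((1 : ℝ) • α) s :=
      (hasDerivAt_id s).smul_const α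
    have h2 : HasDerivAt F (deriv F s) s :=
      (((hFat s hs).differentiableAt (by simp)).hasDerivAt)
    have h3 := h1.add h2
    simp only [one_smul] at h3
    exact h3
  have hFd0 : deriv F 0 = 0 := by
    rw [← derivWithin_of_isOpen hIopen h0I]; exact hF1
  -- key identity : P (γ s) (α + deriv F s) ξ = 0 for s ∈ I and ξ ∈ p
  have hkey : ∀ ξ ∈ p, ∀ s ∈ I, P (γ s) (α + deriv F s) ξ = 0 := by
    intro ξ hξ s hs
    have hγsU : γ s ∈ U := hγU s hs
    have hφ : ∀ t ∈ I, fderiv ℝ S (γ t) ξ = 0 := by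
      intro t ht
      have h1 := (hFsol t ht).2.2 ξ hξ
      have h2 : fderivWithin ℝ S U (γ t) ξ = 0 := h1
      rwa [fderivWithin_of_isOpen hU (hγU t ht)] at h2
    have hφd : HasDerivAt (fun t => fderiv ℝ S (γ t) ξ) (P (γ s) (α + deriv F s) ξ) s := by
      have hc : HasDerivAt (fun t => fderiv ℝ S (γ t)) (P (γ s) (α + deriv F s)) s :=
        (((hSdat _ hγsU).differentiableAt (by simp)).hasFDerivAt).comp_hasDerivAt s (hγd s hs)
      simpa using hc.clm_apply (hasDerivAt_const s ξ)
    have hzero : HasDerivAt (fun t => fderiv ℝ S (γ t) ξ) 0 s := by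
      have hev : (fun t => fderiv ℝ S (γ t) ξ) =ᶠ[𝓝 s] fun _ => (0 : ℝ) :=
        Filter.eventually_of_mem (hIopen.mem_nhds hs) fun t ht => hφ t ht
      exact (hasDerivAt_const s (0 : ℝ)).congr_of_eventuallyEq hev
    exact hφd.unique hzero
  -- second-order identity at 0 : D3 α α ξ + P 0 w₀ ξ = 0
  have hPdiffAt : DifferentiableAt ℝ P 0 := (hPat 0 hU0).differentiableAt (by simp)
  have hkey2 : ∀ ξ ∈ p, D3 α α ξ + P 0 w₀ ξ = 0 := by
    intro ξ hξ
    have hψ0 : ∀ s ∈ I, P (γ s) (α + derivWithin F I s) ξ = 0 := by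
      intro s hs
      rw [derivWithin_of_isOpen hIopen hs]
      exact hkey ξ hξ s hs
    have hFdDiff : DifferentiableAt ℝ (derivWithin F I) 0 :=
      (hFd.contDiffAt (hIopen.mem_nhds h0I)).differentiableAt (by simp)
    have hδ : HasDerivAt (fun s => α + derivWithin F I s)
        (derivWithin (derivWithin F I) I 0) 0 := by
      have h1 : HasDerivAt (derivWithin F I) (deriv (derivWithin F I) 0) 0 :=
        hFdDiff.hasDerivAt
      rw [← derivWithin_of_isOpen hIopen h0I] at h1
      exact h1.const_add α
    have hγd0 : HasDerivAt γ α 0 := by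
      have h := hγd 0 h0I
      rwa [hFd0, add_zero] at h
    have hc : HasDerivAt (fun s => P (γ s)) (D3 α) 0 := by
      have h : HasFDerivAt P D3 (γ 0) := by rw [hγ0]; exact hPdiffAt.hasFDerivAt
      exact HasFDerivAt.comp_hasDerivAt (𝕜 := ℝ) (l := P) 0 h hγd0
    have hstep := hc.clm_apply hδ
    rw [hF1, add_zero, hγ0] at hstep
    have hfin : HasDerivAt (fun s => P (γ s) (α + derivWithin F I s) ξ)
        ((D3 α α + P 0 (derivWithin (derivWithin F I) I 0)) ξ) 0 := by
      simpa using hstep.clm_apply (hasDerivAt_const 0 ξ)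
    have hzero : HasDerivAt (fun s => P (γ s) (α + derivWithin F I s) ξ) 0 0 := by
      have hev : (fun s => P (γ s) (α + derivWithin F I s) ξ) =ᶠ[𝓝 0] fun _ => (0 : ℝ) :=
        Filter.eventually_of_mem (hIopen.mem_nhds h0I) fun s hs => hψ0 s hs
      exact (hasDerivAt_const 0 (0 : ℝ)).congr_of_eventuallyEq hev
    have huniq := hfin.unique hzero
    rw [← hw0] at huniq
    simpa [ContinuousLinearMap.add_apply] using huniq
  -- identification of iterated derivatives
  have hiter2 : ∀ u v : E, iteratedFDerivWithin ℝ 2 S U 0 ![u, v] = P 0 u v := by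
    intro u v
    rw [iteratedFDerivWithin_of_isOpen _ hU hU0, iteratedFDeriv_two_apply]
    simp [hPdef]
  have hiter3 : ∀ u v w : E, iteratedFDerivWithin ℝ 3 S U 0 ![u, v, w] = D3 u v w := by
    intro u v w
    rw [iteratedFDerivWithin_of_isOpen _ hU hU0]
    calc iteratedFDeriv ℝ 3 S 0 ![u, v, w]
        = iteratedFDeriv ℝ 2 (fun y => fderiv ℝ S y) 0 (Fin.init ![u, v, w])
            (![u, v, w] (Fin.last 2)) := iteratedFDeriv_succ_apply_right ![u, v, w]
      _ = fderiv ℝ (fderiv ℝ (fun y => fderiv ℝ S y)) 0 (Fin.init ![u, v, w] 0)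
            (Fin.init ![u, v, w] 1) (![u, v, w] (Fin.last 2)) := by
          rw [iteratedFDeriv_two_apply]
      _ = D3 u v w := by
          have e0 : Fin.init ![u, v, w] 0 = u := rfl
          have e1 : Fin.init ![u, v, w] 1 = v := rfl
          have e2 : ![u, v, w] (Fin.last 2) = w := rfl
          rw [e0, e1, e2]
  -- symmetry facts
  have hsymm2 : ∀ x ∈ U, ∀ u v : E, P x u v = P x v u := fun x hx =>
    (hSat x hx).isSymmSndFDerivAt (by simp; exact WithTop.coe_le_coe.mpr (le_top : (2:ℕ∞) ≤ ⊤))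
  have hsymm31 : ∀ u v : E, D3 u v = D3 v u :=
    (hSdat 0 hU0).isSymmSndFDerivAt (by simp; exact WithTop.coe_le_coe.mpr (le_top : (2:ℕ∞) ≤ ⊤))
  have hsymm32 : ∀ u v w : E, D3 u v w = D3 u w v := by
    intro u v w
    have hg : (fun y => P y v w) =ᶠ[𝓝 (0 : E)] fun y => P y w v :=
      Filter.eventually_of_mem (hU.mem_nhds hU0) fun y hy => hsymm2 y hy v w
    let e : (E →L[ℝ] E →L[ℝ] ℝ) →L[ℝ] ℝ :=
      (ContinuousLinearMap.apply ℝ ℝ w).comp (ContinuousLinearMap.apply ℝ (E →L[ℝ] ℝ) v)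
    let e' : (E →L[ℝ] E →L[ℝ] ℝ) →L[ℝ] ℝ :=
      (ContinuousLinearMap.apply ℝ ℝ v).comp (ContinuousLinearMap.apply ℝ (E →L[ℝ] ℝ) w)
    have h1 : HasFDerivAt (fun y => P y v w) (e.comp D3) 0 := by
      have h := HasFDerivAt.comp (𝕜 := ℝ) (f := P) (0 : E) e.hasFDerivAt hPdiffAt.hasFDerivAt
      apply h.congr_of_eventuallyEq
      filter_upwards with y
      simp [e, Function.comp, ContinuousLinearMap.apply_apply]
    have h2 : HasFDerivAt (fun y => P y w v) (e'.comp D3) 0 := by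
      have h := HasFDerivAt.comp (𝕜 := ℝ) (f := P) (0 : E) e'.hasFDerivAt hPdiffAt.hasFDerivAt
      apply h.congr_of_eventuallyEq
      filter_upwards with y
      simp [e', Function.comp, ContinuousLinearMap.apply_apply]
    have h3 : HasFDerivAt (fun y => P y v w) (e'.comp D3) 0 :=
      h2.congr_of_eventuallyEq hg
    have h4 : e.comp D3 = e'.comp D3 := h1.unique h3
    have h5 := DFunLike.congr_fun h4 u
    simp only [ContinuousLinearMap.coe_comp', Function.comp_apply] at h5
    simpa [e, e', ContinuousLinearMap.apply_apply] using h5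
  -- Part 2
  have part2 : ∀ ξ ∈ p, iteratedFDerivWithin ℝ 3 S U 0 ![ξ, α, α] +
      iteratedFDerivWithin ℝ 2 S U 0 ![ξ, w₀] = 0 := by
    intro ξ hξ
    rw [hiter3, hiter2]
    have e1 : D3 ξ α α = D3 α α ξ := by
      have h1 : D3 ξ α = D3 α ξ := hsymm31 ξ α
      calc D3 ξ α α = D3 α ξ α := by rw [h1]
        _ = D3 α α ξ := hsymm32 α ξ α
    have e2 : P 0 ξ w₀ = P 0 w₀ ξ := hsymm2 0 hU0 ξ w₀
    rw [e1, e2]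
    exact hkey2 ξ hξ
  -- Part 3 : uniqueness
  refine ⟨hmemw0, part2, ?_⟩
  intro w hw hweq
  have heq : ∀ ξ ∈ p, B (T ξ) (w - w₀) = 0 := by
    intro ξ hξ
    have h1 := hweq ξ hξ
    have h2 := part2 ξ hξ
    have h3 : iteratedFDerivWithin ℝ 2 S U 0 ![ξ, w] =
        iteratedFDerivWithin ℝ 2 S U 0 ![ξ, w₀] := by linarith
    rw [hS2, hS2] at h3
    rw [map_sub, h3, sub_self]
  have hαker : α ∈ LinearMap.ker (T : E →ₗ[ℝ] E) := by
    rw [hker]; exact Submodule.mem_span_singleton_self α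
  have hTα : T α = 0 := hαker
  have hαnp : α ∉ p := by
    intro hmem
    obtain ⟨u, hu⟩ := hmem
    have hBαα : B α α = 0 := by
      have : B (T u) α = B u (T α) := hTsymm u α
      rw [hTα] at this
      simp only [map_zero] at this
      calc B α α = B (T u) α := by rw [show T u = α from hu]
        _ = 0 := this
    exact absurd hBαα (ne_of_gt (hBpos α hα))
  have hrank1 : Module.finrank ℝ (E ⧸ p) = 1 := by
    rw [← hindex, hker]
    exact finrank_span_singleton hα
  have hdecomp : ∀ z : E, ∃ c : ℝ, z - c • α ∈ p := by
    intro z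
    have hπα : p.mkQ α ≠ 0 := by
      simpa [Submodule.Quotient.mk_eq_zero] using hαnp
    obtain ⟨c, hc⟩ := (finrank_eq_one_iff_of_nonzero' (p.mkQ α) hπα).mp hrank1 (p.mkQ z)
    refine ⟨c, ?_⟩
    have hq : p.mkQ (z - c • α) = 0 := by
      rw [map_sub, map_smul, hc, sub_self]
    rwa [← Submodule.Quotient.mk_eq_zero p]
  obtain ⟨z, hz⟩ := LinearMap.mem_range.mp (p.sub_mem hw hmemw0)
  obtain ⟨c, hr⟩ := hdecomp z
  have hTr : T (z - c • α) = w - w₀ := by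
    have : (T : E →ₗ[ℝ] E) z = w - w₀ := hz
    rw [map_sub, map_smul, hTα, smul_zero, sub_zero]
    exact this
  have hB0 : B (T (z - c • α)) (T (z - c • α)) = 0 := by
    rw [hTr]
    have := heq (z - c • α) hr
    rwa [hTr] at this
  have hT0 : T (z - c • α) = 0 := by
    by_contra hne
    exact (hBpos _ hne).ne' hB0
  have : w - w₀ = 0 := by rw [← hTr, hT0]
  have hww : w = w₀ := sub_eq_zero.mp this
  exact hww
end

section
/- In the setting of the splitting construction, the third derivative of the implicitly defined F at 0 satisfies, for all ξ ∈ range T: S⁽⁴⁾(0)(ξ ⊗ α^{⊗3}) + 3 S⁽³⁾(0)(ξ ⊗ α ⊗ F″(0)) + S⁽²⁾(0)(ξ ⊗ F‴(0)) = 0. -/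
open Filter Topology

noncomputable instance nacg3 {E : Type*} [NormedAddCommGroup E] [NormedSpace ℝ E] :
    NormedAddCommGroup (E →L[ℝ] E →L[ℝ] E →L[ℝ] ℝ) :=
  ContinuousLinearMap.toNormedAddCommGroup (σ₁₂ := RingHom.id ℝ) (F := E →L[ℝ] E →L[ℝ] ℝ)

noncomputable instance ns3 {E : Type*} [NormedAddCommGroup E] [NormedSpace ℝ E] :
    NormedSpace ℝ (E →L[ℝ] E →L[ℝ] E →L[ℝ] ℝ) :=
  ContinuousLinearMap.toNormedSpace (σ₁₂ := RingHom.id ℝ) (F := E →L[ℝ] E →L[ℝ] ℝ) (𝕜' := ℝ)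

section Aux

variable {E : Type*} [NormedAddCommGroup E] [NormedSpace ℝ E]
  {F : Type*} [NormedAddCommGroup F] [NormedSpace ℝ F]
  {G : Type*} [NormedAddCommGroup G] [NormedSpace ℝ G]

private lemma cd_fderiv {f : E → F} {x : E} (hf : ContDiffAt ℝ (⊤ : ℕ∞) f x) :
    ContDiffAt ℝ (⊤ : ℕ∞) (fderiv ℝ f) x :=
  hf.fderiv_right (by simp)

private lemma peel {c : E → F →L[ℝ] G} {x : E} (hc : DifferentiableAt ℝ c x) (v : F) (u : E) :
    fderiv ℝ (fun y => c y v) x u = fderiv ℝ c x u v := by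
  rw [fderiv_clm_apply hc (differentiableAt_const v)]
  simp

end Aux

section Aux2

variable {E : Type*} [NormedAddCommGroup E] [NormedSpace ℝ E]
  {S : E → ℝ} {U : Set E} {x : E}

private lemma itfd3_eq (hU : IsOpen U) (hS : ContDiffOn ℝ (⊤ : ℕ∞) S U) (hx : x ∈ U) (u v w : E) :
    iteratedFDeriv ℝ 3 S x ![u, v, w]
      = fderiv ℝ (fderiv ℝ (fderiv ℝ S)) x u v w := by
  have hS' : ContDiffAt ℝ (⊤ : ℕ∞) S x := hS.contDiffAt (hU.mem_nhds hx)
  have hd2 : DifferentiableAt ℝ (fderiv ℝ (fderiv ℝ S)) x :=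
    (cd_fderiv (cd_fderiv hS')).differentiableAt (by simp)
  have hit2 : DifferentiableAt ℝ (iteratedFDeriv ℝ 2 S) x :=
    (hS'.iteratedFDeriv_right (m := 1) (i := 2) (by norm_cast)).differentiableAt one_ne_zero
  have h1 : iteratedFDeriv ℝ 3 S x ![u, v, w]
      = fderiv ℝ (iteratedFDeriv ℝ 2 S) x u ![v, w] := by
    have := iteratedFDeriv_succ_apply_left (𝕜 := ℝ) (n := 2) (f := S) (x := x) ![u, v, w]
    simpa using this
  have h2 : fderiv ℝ (iteratedFDeriv ℝ 2 S) x u ![v, w]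
      = fderiv ℝ (fun y => iteratedFDeriv ℝ 2 S y ![v, w]) x u := by
    rw [fderiv_continuousMultilinear_apply_const hit2]
    simp
  have h3 : (fun y => iteratedFDeriv ℝ 2 S y ![v, w])
      = fun y => fderiv ℝ (fderiv ℝ S) y v w := by
    funext y
    rw [iteratedFDeriv_two_apply]
    simp
  have hc1 : DifferentiableAt ℝ (fun y => fderiv ℝ (fderiv ℝ S) y v) x :=
    hd2.clm_apply (differentiableAt_const v)
  rw [h1, h2, h3]
  rw [peel hc1 w u, peel hd2 v u]

private lemma sym2 (hU : IsOpen U) (hS : ContDiffOn ℝ (⊤ : ℕ∞) S U) (hx : x ∈ U) (u v : E) :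
    fderiv ℝ (fderiv ℝ S) x u v = fderiv ℝ (fderiv ℝ S) x v u :=
  ((hS.contDiffAt (hU.mem_nhds hx)).isSymmSndFDerivAt (by rw [minSmoothness_of_isRCLikeNormedField]; norm_cast)) u v

private lemma peel2 (hU : IsOpen U) (hS : ContDiffOn ℝ (⊤ : ℕ∞) S U) (hx : x ∈ U) (u v w : E) :
    fderiv ℝ (fun y => fderiv ℝ (fderiv ℝ S) y v w) x u
      = fderiv ℝ (fderiv ℝ (fderiv ℝ S)) x u v w := by
  have hS' : ContDiffAt ℝ (⊤ : ℕ∞) S x := hS.contDiffAt (hU.mem_nhds hx)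
  have hd2 : DifferentiableAt ℝ (fderiv ℝ (fderiv ℝ S)) x :=
    (cd_fderiv (cd_fderiv hS')).differentiableAt (by simp)
  rw [peel (hd2.clm_apply (differentiableAt_const v)) w u, peel hd2 v u]

private lemma sym3_12 (hU : IsOpen U) (hS : ContDiffOn ℝ (⊤ : ℕ∞) S U) (hx : x ∈ U) (u v w : E) :
    fderiv ℝ (fderiv ℝ (fderiv ℝ S)) x u v w
      = fderiv ℝ (fderiv ℝ (fderiv ℝ S)) x v u w := by
  have h := ((cd_fderiv (hS.contDiffAt (hU.mem_nhds hx))).isSymmSndFDerivAt (by rw [minSmoothness_of_isRCLikeNormedField]; norm_cast)) u v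
  exact congrArg (fun (L : E →L[ℝ] ℝ) => L w) h

private lemma sym3_23 (hU : IsOpen U) (hS : ContDiffOn ℝ (⊤ : ℕ∞) S U) (hx : x ∈ U) (u v w : E) :
    fderiv ℝ (fderiv ℝ (fderiv ℝ S)) x u v w
      = fderiv ℝ (fderiv ℝ (fderiv ℝ S)) x u w v := by
  have hev : (fun y => fderiv ℝ (fderiv ℝ S) y v w)
      =ᶠ[𝓝 x] (fun y => fderiv ℝ (fderiv ℝ S) y w v) :=
    Filter.eventually_of_mem (hU.mem_nhds hx) (fun y hy => sym2 hU hS hy v w)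
  rw [← peel2 hU hS hx u v w, ← peel2 hU hS hx u w v, hev.fderiv_eq]

private lemma peel3 (hU : IsOpen U) (hS : ContDiffOn ℝ (⊤ : ℕ∞) S U) (hx : x ∈ U) (t u v w : E) :
    fderiv ℝ (fun y => fderiv ℝ (fderiv ℝ (fderiv ℝ S)) y u v w) x t
      = fderiv ℝ (fderiv ℝ (fderiv ℝ (fderiv ℝ S))) x t u v w := by
  have hS' : ContDiffAt ℝ (⊤ : ℕ∞) S x := hS.contDiffAt (hU.mem_nhds hx)
  have hd3 : DifferentiableAt ℝ (fderiv ℝ (fderiv ℝ (fderiv ℝ S))) x :=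
    (cd_fderiv (cd_fderiv (cd_fderiv hS'))).differentiableAt (by simp)
  have hc1 : DifferentiableAt ℝ (fun y => fderiv ℝ (fderiv ℝ (fderiv ℝ S)) y u) x :=
    DifferentiableAt.clm_apply (c := fderiv ℝ (fderiv ℝ (fderiv ℝ S))) hd3 (differentiableAt_const u)
  have hc2 : DifferentiableAt ℝ (fun y => fderiv ℝ (fderiv ℝ (fderiv ℝ S)) y u v) x :=
    hc1.clm_apply (differentiableAt_const v)
  rw [peel hc2 w t, peel hc1 v t, peel hd3 u t]

private lemma itfd4_eq (hU : IsOpen U) (hS : ContDiffOn ℝ (⊤ : ℕ∞) S U) (hx : x ∈ U) (t u v w : E) :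
    iteratedFDeriv ℝ 4 S x ![t, u, v, w]
      = fderiv ℝ (fderiv ℝ (fderiv ℝ (fderiv ℝ S))) x t u v w := by
  have hS' : ContDiffAt ℝ (⊤ : ℕ∞) S x := hS.contDiffAt (hU.mem_nhds hx)
  have hit3 : DifferentiableAt ℝ (iteratedFDeriv ℝ 3 S) x :=
    (hS'.iteratedFDeriv_right (m := 1) (i := 3) (by norm_cast)).differentiableAt one_ne_zero
  have h1 : iteratedFDeriv ℝ 4 S x ![t, u, v, w]
      = fderiv ℝ (iteratedFDeriv ℝ 3 S) x t ![u, v, w] := by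
    have := iteratedFDeriv_succ_apply_left (𝕜 := ℝ) (n := 3) (f := S) (x := x) ![t, u, v, w]
    simpa using this
  have h2 : fderiv ℝ (iteratedFDeriv ℝ 3 S) x t ![u, v, w]
      = fderiv ℝ (fun y => iteratedFDeriv ℝ 3 S y ![u, v, w]) x t := by
    rw [fderiv_continuousMultilinear_apply_const hit3]
    simp
  have hev : (fun y => iteratedFDeriv ℝ 3 S y ![u, v, w])
      =ᶠ[𝓝 x] (fun y => fderiv ℝ (fderiv ℝ (fderiv ℝ S)) y u v w) :=
    Filter.eventually_of_mem (hU.mem_nhds hx) (fun y hy => itfd3_eq hU hS hy u v w)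
  rw [h1, h2, hev.fderiv_eq, peel3 hU hS hx t u v w]

private lemma sym4_12 (hU : IsOpen U) (hS : ContDiffOn ℝ (⊤ : ℕ∞) S U) (hx : x ∈ U) (t u v w : E) :
    fderiv ℝ (fderiv ℝ (fderiv ℝ (fderiv ℝ S))) x t u v w
      = fderiv ℝ (fderiv ℝ (fderiv ℝ (fderiv ℝ S))) x u t v w := by
  have h := ((cd_fderiv (cd_fderiv (hS.contDiffAt (hU.mem_nhds hx)))).isSymmSndFDerivAt
    (by rw [minSmoothness_of_isRCLikeNormedField]; norm_cast)) t u
  exact congrArg (fun (L : E →L[ℝ] (E →L[ℝ] ℝ)) => L v w) h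

private lemma sym4_23 (hU : IsOpen U) (hS : ContDiffOn ℝ (⊤ : ℕ∞) S U) (hx : x ∈ U) (t u v w : E) :
    fderiv ℝ (fderiv ℝ (fderiv ℝ (fderiv ℝ S))) x t u v w
      = fderiv ℝ (fderiv ℝ (fderiv ℝ (fderiv ℝ S))) x t v u w := by
  have hev : (fun y => fderiv ℝ (fderiv ℝ (fderiv ℝ S)) y u v w)
      =ᶠ[𝓝 x] (fun y => fderiv ℝ (fderiv ℝ (fderiv ℝ S)) y v u w) :=
    Filter.eventually_of_mem (hU.mem_nhds hx) (fun y hy => sym3_12 hU hS hy u v w)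
  rw [← peel3 hU hS hx t u v w, ← peel3 hU hS hx t v u w, hev.fderiv_eq]

private lemma sym4_34 (hU : IsOpen U) (hS : ContDiffOn ℝ (⊤ : ℕ∞) S U) (hx : x ∈ U) (t u v w : E) :
    fderiv ℝ (fderiv ℝ (fderiv ℝ (fderiv ℝ S))) x t u v w
      = fderiv ℝ (fderiv ℝ (fderiv ℝ (fderiv ℝ S))) x t u w v := by
  have hev : (fun y => fderiv ℝ (fderiv ℝ (fderiv ℝ S)) y u v w)
      =ᶠ[𝓝 x] (fun y => fderiv ℝ (fderiv ℝ (fderiv ℝ S)) y u w v) :=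
    Filter.eventually_of_mem (hU.mem_nhds hx) (fun y hy => sym3_23 hU hS hy u v w)
  rw [← peel3 hU hS hx t u v w, ← peel3 hU hS hx t u w v, hev.fderiv_eq]

end Aux2

section Aux3

variable {F : Type*} [NormedAddCommGroup F] [NormedSpace ℝ F]

private lemma cd_deriv {f : ℝ → F} {x : ℝ} (hf : ContDiffAt ℝ (⊤ : ℕ∞) f x) :
    ContDiffAt ℝ (⊤ : ℕ∞) (deriv f) x := by
  have h : deriv f = fun y => fderiv ℝ f y 1 := rfl
  rw [h]
  exact (cd_fderiv hf).clm_apply contDiffAt_const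

private lemma idw_eq (f : ℝ → F) {s : Set ℝ} (hs : IsOpen s) {x : ℝ} (hx : x ∈ s) (n : ℕ) :
    iteratedDerivWithin n f s x = iteratedDeriv n f x := by
  unfold iteratedDerivWithin iteratedDeriv
  rw [iteratedFDerivWithin_of_isOpen n hs hx]

private lemma id2_eq (f : ℝ → F) (x : ℝ) : iteratedDeriv 2 f x = deriv (deriv f) x := by
  rw [show (2:ℕ) = 1+1 from rfl, iteratedDeriv_succ, iteratedDeriv_one]

private lemma id3_eq (f : ℝ → F) (x : ℝ) :
    iteratedDeriv 3 f x = deriv (deriv (deriv f)) x := by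
  rw [show (3:ℕ) = 1+1+1 from rfl, iteratedDeriv_succ, iteratedDeriv_succ, iteratedDeriv_one]

end Aux3

/-- in the splitting construction, the third derivative of the implicitly
defined `F` at `0` satisfies, for all `ξ ∈ range T`,
`S⁽⁴⁾(0)(ξ⊗α^{⊗3}) + 3 S⁽³⁾(0)(ξ⊗α⊗F″(0)) + S⁽²⁾(0)(ξ⊗F‴(0)) = 0`. -/
theorem splitting_thirdDeriv_equation
    {E : Type*} [NormedAddCommGroup E] [NormedSpace ℝ E] [CompleteSpace E]
    (B : E →L[ℝ] E →L[ℝ] ℝ)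
    (hBsymm : ∀ u v : E, B u v = B v u)
    (hBpos : ∀ u : E, u ≠ 0 → 0 < B u u)
    (U : Set E) (hU : IsOpen U) (hU0 : (0 : E) ∈ U)
    (S : E → ℝ) (hS : ContDiffOn ℝ (⊤ : ℕ∞) S U)
    (hS0 : S 0 = 0) (hS1 : fderivWithin ℝ S U 0 = 0)
    (T : E →L[ℝ] E)
    (hrange : IsClosed (LinearMap.range (T : E →ₗ[ℝ] E) : Set E))
    (hcoker : FiniteDimensional ℝ (E ⧸ LinearMap.range (T : E →ₗ[ℝ] E)))
    (hindex : Module.finrank ℝ (LinearMap.ker (T : E →ₗ[ℝ] E)) =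
      Module.finrank ℝ (E ⧸ LinearMap.range (T : E →ₗ[ℝ] E)))
    (hTsymm : ∀ u v : E, B (T u) v = B u (T v))
    (α : E) (hα : α ≠ 0)
    (hker : LinearMap.ker (T : E →ₗ[ℝ] E) = Submodule.span ℝ {α})
    (hS2 : ∀ u v : E, iteratedFDerivWithin ℝ 2 S U 0 ![u, v] = B (T u) v)
    (a b : ℝ) (hab : (0 : ℝ) ∈ Set.Ioo a b)
    (F : ℝ → E) (hF : ContDiffOn ℝ (⊤ : ℕ∞) F (Set.Ioo a b))
    (hF0 : F 0 = 0) (hF1 : derivWithin F (Set.Ioo a b) 0 = 0)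
    (hFsol : ∀ s ∈ Set.Ioo a b,
      F s ∈ LinearMap.range (T : E →ₗ[ℝ] E) ∧
      s • α + F s ∈ U ∧
      ∀ ξ ∈ LinearMap.range (T : E →ₗ[ℝ] E),
        fderivWithin ℝ S U (s • α + F s) ξ = 0) :
    ∀ ξ ∈ LinearMap.range (T : E →ₗ[ℝ] E),
      iteratedFDerivWithin ℝ 4 S U 0 ![ξ, α, α, α] +
        3 * iteratedFDerivWithin ℝ 3 S U 0
            ![ξ, α, iteratedDerivWithin 2 F (Set.Ioo a b) 0] +
        iteratedFDerivWithin ℝ 2 S U 0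
            ![ξ, iteratedDerivWithin 3 F (Set.Ioo a b) 0] = 0 := by
  intro ξ hξ
  have hI : IsOpen (Set.Ioo a b) := isOpen_Ioo
  -- basic facts about F and the curve γ s = s • α + F s
  have hFat : ∀ s ∈ Set.Ioo a b, ContDiffAt ℝ (⊤ : ℕ∞) F s :=
    fun s hs => hF.contDiffAt (hI.mem_nhds hs)
  have hγU : ∀ s ∈ Set.Ioo a b, (s • α + F s) ∈ U := fun s hs => (hFsol s hs).2.1
  have hγd : ∀ s ∈ Set.Ioo a b,
      HasDerivAt (fun s : ℝ => s • α + F s) (α + deriv F s) s := by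
    intro s hs
    have h1 : HasDerivAt (fun s : ℝ => s • α) ((1:ℝ) • α) s := (hasDerivAt_id s).smul_const α
    have h2 : HasDerivAt F (deriv F s) s := ((hFat s hs).differentiableAt (by simp)).hasDerivAt
    have h3 := h1.add h2
    rw [one_smul] at h3
    exact h3
  have hγ'd : ∀ s ∈ Set.Ioo a b,
      HasDerivAt (fun s : ℝ => α + deriv F s) (deriv (deriv F) s) s := by
    intro s hs
    have h2 : HasDerivAt (deriv F) (deriv (deriv F) s) s :=
      ((cd_deriv (hFat s hs)).differentiableAt (by simp)).hasDerivAt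
    have h3 := (hasDerivAt_const s α).add h2
    rw [zero_add] at h3
    exact h3
  have hγ0 : (0:ℝ) • α + F 0 = 0 := by simp [hF0]
  have hdF0 : deriv F 0 = 0 := by
    rw [← derivWithin_of_isOpen hI hab]; exact hF1
  -- derivative data for S along the curve
  have hSat : ∀ s ∈ Set.Ioo a b, ContDiffAt ℝ (⊤ : ℕ∞) S (s • α + F s) :=
    fun s hs => hS.contDiffAt (hU.mem_nhds (hγU s hs))
  -- first level: g₁ s = D1 (γ s) ξ vanishes on I
  have hg1 : ∀ s ∈ Set.Ioo a b, fderiv ℝ S (s • α + F s) ξ = 0 := by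
    intro s hs
    rw [← fderivWithin_of_isOpen hU (hγU s hs)]
    exact (hFsol s hs).2.2 ξ hξ
  have hg1' : ∀ s ∈ Set.Ioo a b,
      HasDerivAt (fun s : ℝ => fderiv ℝ S (s • α + F s) ξ)
        (fderiv ℝ (fderiv ℝ S) (s • α + F s) (α + deriv F s) ξ) s := by
    intro s hs
    have hc : HasDerivAt (fun s : ℝ => fderiv ℝ S (s • α + F s))
        (fderiv ℝ (fderiv ℝ S) (s • α + F s) (α + deriv F s)) s :=
      (((cd_fderiv (hSat s hs)).differentiableAt (by simp)).hasFDerivAt).comp_hasDerivAt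
        s (hγd s hs)
    simpa using hc.clm_apply (hasDerivAt_const s ξ)
  have hzero2 : ∀ s ∈ Set.Ioo a b,
      fderiv ℝ (fderiv ℝ S) (s • α + F s) (α + deriv F s) ξ = 0 := by
    intro s hs
    have hev : (fun s : ℝ => fderiv ℝ S (s • α + F s) ξ) =ᶠ[nhds s] fun _ => (0:ℝ) :=
      Filter.eventually_of_mem (hI.mem_nhds hs) (fun y hy => hg1 y hy)
    exact (hg1' s hs).unique ((hasDerivAt_const s (0:ℝ)).congr_of_eventuallyEq hev)
  -- second level
  have hg2' : ∀ s ∈ Set.Ioo a b,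
      HasDerivAt (fun s : ℝ => fderiv ℝ (fderiv ℝ S) (s • α + F s) (α + deriv F s) ξ)
        (fderiv ℝ (fderiv ℝ (fderiv ℝ S)) (s • α + F s) (α + deriv F s) (α + deriv F s) ξ
          + fderiv ℝ (fderiv ℝ S) (s • α + F s) (deriv (deriv F) s) ξ) s := by
    intro s hs
    have hc : HasDerivAt (fun s : ℝ => fderiv ℝ (fderiv ℝ S) (s • α + F s))
        (fderiv ℝ (fderiv ℝ (fderiv ℝ S)) (s • α + F s) (α + deriv F s)) s :=
      HasFDerivAt.comp_hasDerivAt (l := fderiv ℝ (fderiv ℝ S))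
        s (((cd_fderiv (cd_fderiv (hSat s hs))).differentiableAt (by simp)).hasFDerivAt) (hγd s hs)
    have hu := hc.clm_apply (hγ'd s hs)
    simpa [ContinuousLinearMap.add_apply] using hu.clm_apply (hasDerivAt_const s ξ)
  have hzero3 : ∀ s ∈ Set.Ioo a b,
      fderiv ℝ (fderiv ℝ (fderiv ℝ S)) (s • α + F s) (α + deriv F s) (α + deriv F s) ξ
        + fderiv ℝ (fderiv ℝ S) (s • α + F s) (deriv (deriv F) s) ξ = 0 := by
    intro s hs
    have hev : (fun s : ℝ => fderiv ℝ (fderiv ℝ S) (s • α + F s) (α + deriv F s) ξ)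
        =ᶠ[nhds s] fun _ => (0:ℝ) :=
      Filter.eventually_of_mem (hI.mem_nhds hs) (fun y hy => hzero2 y hy)
    exact (hg2' s hs).unique ((hasDerivAt_const s (0:ℝ)).congr_of_eventuallyEq hev)
  -- third level, at s = 0 only
  have key : fderiv ℝ (fderiv ℝ (fderiv ℝ (fderiv ℝ S))) 0 α α α ξ
      + fderiv ℝ (fderiv ℝ (fderiv ℝ S)) 0 (deriv (deriv F) 0) α ξ
      + fderiv ℝ (fderiv ℝ (fderiv ℝ S)) 0 α (deriv (deriv F) 0) ξ
      + (fderiv ℝ (fderiv ℝ (fderiv ℝ S)) 0 α (deriv (deriv F) 0) ξ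
        + fderiv ℝ (fderiv ℝ S) 0 (deriv (deriv (deriv F)) 0) ξ) = 0 := by
    have hs := hab
    have hc3 : HasDerivAt (fun s : ℝ => fderiv ℝ (fderiv ℝ (fderiv ℝ S)) (s • α + F s))
        (fderiv ℝ (fderiv ℝ (fderiv ℝ (fderiv ℝ S))) ((0:ℝ) • α + F 0) (α + deriv F 0)) 0 :=
      HasFDerivAt.comp_hasDerivAt (l := fderiv ℝ (fderiv ℝ (fderiv ℝ S))) 0
        (((cd_fderiv (cd_fderiv (cd_fderiv (hSat 0 hs)))).differentiableAt
        (by simp)).hasFDerivAt) (hγd 0 hs)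
    have hv1 := HasDerivAt.clm_apply
      (c := fun s : ℝ => fderiv ℝ (fderiv ℝ (fderiv ℝ S)) (s • α + F s)) hc3 (hγ'd 0 hs)
    have hv2 := hv1.clm_apply (hγ'd 0 hs)
    have hv3 := hv2.clm_apply (hasDerivAt_const 0 ξ)
    have hc2 : HasDerivAt (fun s : ℝ => fderiv ℝ (fderiv ℝ S) (s • α + F s))
        (fderiv ℝ (fderiv ℝ (fderiv ℝ S)) ((0:ℝ) • α + F 0) (α + deriv F 0)) 0 :=
      HasFDerivAt.comp_hasDerivAt (l := fderiv ℝ (fderiv ℝ S))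
        0 (((cd_fderiv (cd_fderiv (hSat 0 hs))).differentiableAt (by simp)).hasFDerivAt) (hγd 0 hs)
    have hF3 : HasDerivAt (fun s : ℝ => deriv (deriv F) s) (deriv (deriv (deriv F)) 0) 0 :=
      ((cd_deriv (cd_deriv (hFat 0 hs))).differentiableAt (by simp)).hasDerivAt
    have hw1 := hc2.clm_apply hF3
    have hw2 := hw1.clm_apply (hasDerivAt_const 0 ξ)
    have hsum := hv3.add hw2
    have hev : (fun s : ℝ =>
        fderiv ℝ (fderiv ℝ (fderiv ℝ S)) (s • α + F s) (α + deriv F s) (α + deriv F s) ξ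
          + fderiv ℝ (fderiv ℝ S) (s • α + F s) (deriv (deriv F) s) ξ)
        =ᶠ[nhds 0] fun _ => (0:ℝ) :=
      Filter.eventually_of_mem (hI.mem_nhds hs) (fun y hy => hzero3 y hy)
    have h0 := hsum.unique ((hasDerivAt_const 0 (0:ℝ)).congr_of_eventuallyEq hev)
    rw [hγ0, hdF0, add_zero] at h0
    simpa [ContinuousLinearMap.add_apply] using h0
  -- rewrite goal via unrestricted derivatives and symmetry of higher derivatives
  have e4 : iteratedFDerivWithin ℝ 4 S U 0 ![ξ, α, α, α]
      = fderiv ℝ (fderiv ℝ (fderiv ℝ (fderiv ℝ S))) 0 α α α ξ := by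
    rw [iteratedFDerivWithin_of_isOpen 4 hU hU0, itfd4_eq hU hS hU0 ξ α α α,
      sym4_12 hU hS hU0, sym4_23 hU hS hU0, sym4_34 hU hS hU0]
  have eD2 : iteratedDerivWithin 2 F (Set.Ioo a b) 0 = deriv (deriv F) 0 := by
    rw [idw_eq F hI hab 2, id2_eq]
  have eD3 : iteratedDerivWithin 3 F (Set.Ioo a b) 0 = deriv (deriv (deriv F)) 0 := by
    rw [idw_eq F hI hab 3, id3_eq]
  have e3 : iteratedFDerivWithin ℝ 3 S U 0 ![ξ, α, iteratedDerivWithin 2 F (Set.Ioo a b) 0]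
      = fderiv ℝ (fderiv ℝ (fderiv ℝ S)) 0 α (deriv (deriv F) 0) ξ := by
    rw [eD2, iteratedFDerivWithin_of_isOpen 3 hU hU0,
      itfd3_eq hU hS hU0 ξ α (deriv (deriv F) 0), sym3_12 hU hS hU0, sym3_23 hU hS hU0]
  have e2 : iteratedFDerivWithin ℝ 2 S U 0 ![ξ, iteratedDerivWithin 3 F (Set.Ioo a b) 0]
      = fderiv ℝ (fderiv ℝ S) 0 (deriv (deriv (deriv F)) 0) ξ := by
    rw [eD3, iteratedFDerivWithin_of_isOpen 2 hU hU0, iteratedFDeriv_two_apply]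
    simp only [Matrix.cons_val_zero, Matrix.cons_val_one, Matrix.head_cons]
    exact sym2 hU hS hU0 _ _
  have e3' : fderiv ℝ (fderiv ℝ (fderiv ℝ S)) 0 (deriv (deriv F) 0) α ξ
      = fderiv ℝ (fderiv ℝ (fderiv ℝ S)) 0 α (deriv (deriv F) 0) ξ :=
    sym3_12 hU hS hU0 _ _ _
  rw [e4, e3, e2]
  rw [e3'] at key
  linarith [key]
end
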